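/- The field extension Q(√13)/Q is cyclotomic in the sense that Q(√13) ⊆ Q(ζ₁₃), but the field Q(λ_0) with λ_0 = i√((−1+√13)/6) satisfies Q(√13) ⊊ Q(λ_0) and Q(λ_0) is not contained in Q(ζ_n) for any n. -/

import Mathlib

/-!
The quadratic Gauss sum `g = ∑ₐ (a/13) ζ₁₃ᵃ` lies in `ℚ(ζ₁₃)` and satisfies `g² = 13`, so
`√13 = ±g ∈ ℚ(ζ₁₃)`. Since `ℚ(√13) ⊆ ℝ` while `λ₀` is not real, `ℚ(√13) ⊊ ℚ(λ₀)`.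

Suppose `λ₀` lies in an abelian extension `K ⊆ ℂ` of `ℚ` (such as `ℚ(ζₙ)`). Complex conjugation
restricts to an automorphism `c` of `K`, and `K` has an automorphism `σ` with `σ √13 = -√13`.
As `c λ₀ = -λ₀` and `c σ = σ c`, also `c (σ λ₀) = -σ λ₀`, so `σ λ₀` is purely imaginary and
`(σ λ₀)² ≤ 0`. But `6 λ₀² = 1 - √13` gives `6 (σ λ₀)² = 1 + √13 > 0`.
-/

noncomputable def lambda0 : ℂ := Complex.I * Real.sqrt ((-1 + Real.sqrt 13) / 6)

open IntermediateField Polynomial ComplexConjugate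

theorem Polynomial.irreducible_X_sq_sub_C_of_prime {p : ℕ} (hp : p.Prime) :
    Irreducible (X ^ 2 - C (p : ℚ)) := by
  refine X_pow_sub_C_irreducible_of_prime Nat.prime_two fun q hq ↦ ?_
  exact hp.prime.not_isSquare (Rat.isSquare_natCast_iff.mp ⟨q, by rw [← hq, sq]⟩)

theorem minpoly_eq_X_sq_sub_C {F E : Type*} [Field F] [Field E] [Algebra F E] {a : F}
    (ha : Irreducible (X ^ 2 - C a)) {x : E} (hx : x ^ 2 = algebraMap F E a) :
    minpoly F x = X ^ 2 - C a :=
  (minpoly.eq_of_irreducible_of_monic ha (by simp [hx]) (monic_X_pow_sub_C _ two_ne_zero)).symm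

theorem exists_algEquiv_apply_eq_neg {F E : Type*} [Field F] [Field E] [Algebra F E]
    [Normal F E] {a : F} (ha : Irreducible (X ^ 2 - C a)) {x : E}
    (hx : x ^ 2 = algebraMap F E a) : ∃ σ : E ≃ₐ[F] E, σ x = -x := by
  have hneg : (-x) ^ 2 = algebraMap F E a := by rw [neg_sq, hx]
  exact (Normal.minpoly_eq_iff_mem_orbit E).mp
    ((minpoly_eq_X_sq_sub_C ha hneg).trans (minpoly_eq_X_sq_sub_C ha hx).symm)

theorem IsPrimitiveRoot.isAbelianGalois_adjoin {K L : Type*} [Field K] [Field L] [Algebra K L]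
    {n : ℕ} [NeZero n] {ζ : L} (hζ : IsPrimitiveRoot ζ n) : IsAbelianGalois K K⟮ζ⟯ := by
  have : IsCyclotomicExtension {n} K K⟮ζ⟯ := by
    change IsCyclotomicExtension {n} K K⟮ζ⟯.toSubalgebra
    rw [adjoin_simple_toSubalgebra_of_isAlgebraic
      (hζ.isIntegral (NeZero.pos n)).tower_top.isAlgebraic]
    exact hζ.adjoin_isCyclotomicExtension K
  exact IsCyclotomicExtension.isAbelianGalois {n} K _

theorem sqrt_mem_adjoin_primitiveRoot {p : ℕ} [Fact p.Prime] (hp : p % 4 = 1) {ζ : ℂ}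
    (hζ : IsPrimitiveRoot ζ p) : ((√p : ℝ) : ℂ) ∈ ℚ⟮ζ⟯ := by
  have : NeZero p := ⟨(Fact.out : p.Prime).ne_zero⟩
  have hp2 : ringChar (ZMod p) ≠ 2 := by
    rw [ZMod.ringChar_zmod_n]
    omega
  let χ := (quadraticChar (ZMod p)).ringHomComp (Int.castRingHom ℂ)
  let ψ := AddChar.zmodChar p hζ.pow_eq_one
  have hχ : χ ≠ 1 :=
    (MulChar.ringHomComp_ne_one_iff (RingHom.injective_int _)).mpr (quadraticChar_ne_one hp2)
  have hsq : gaussSum χ ψ ^ 2 = p := by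
    rw [gaussSum_sq hχ ((quadraticChar_isQuadratic _).comp _)
      (AddChar.zmodChar_primitive_of_primitive_root p hζ)]
    simp [χ, quadraticChar_neg_one hp2, ZMod.χ₄_nat_one_mod_four hp]
  have hmem : gaussSum χ ψ ∈ ℚ⟮ζ⟯ := by
    refine sum_mem fun a _ ↦ mul_mem (intCast_mem _ _) ?_
    rw [AddChar.zmodChar_apply]
    exact pow_mem (mem_adjoin_simple_self ℚ ζ) _
  have hsqrt : ((√p : ℝ) : ℂ) ^ 2 = gaussSum χ ψ ^ 2 := by
    rw [hsq, ← Complex.ofReal_pow, Real.sq_sqrt (Nat.cast_nonneg p), Complex.ofReal_natCast]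
  rcases sq_eq_sq_iff_eq_or_eq_neg.mp hsqrt with h | h
  · exact h ▸ hmem
  · exact h ▸ neg_mem hmem

theorem Complex.re_sq_nonpos_of_conj_eq_neg {z : ℂ} (hz : conj z = -z) : (z ^ 2).re ≤ 0 := by
  have hre : z.re = 0 := by
    have := congrArg Complex.re hz
    simp only [Complex.conj_re, Complex.neg_re] at this
    linarith
  simp [sq, hre, mul_self_nonneg]

theorem conj_algEquiv_apply_eq_neg {K : IntermediateField ℚ ℂ} [IsAbelianGalois ℚ K]
    (σ : K ≃ₐ[ℚ] K) {x : K} (hx : conj (x : ℂ) = -x) : conj (σ x : ℂ) = -(σ x) := by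
  set c := (Complex.conjAe.restrictScalars ℚ).restrictNormal K
  have hc (y : K) : (c y : ℂ) = conj (y : ℂ) := AlgEquiv.restrictNormal_commutes _ K y
  have hcx : c x = -x := Subtype.ext (by rw [hc, hx, NegMemClass.coe_neg])
  have hcomm : c * σ = σ * c := IsMulCommutative.is_comm.comm c σ
  calc conj (σ x : ℂ) = ((c * σ) x : ℂ) := (hc _).symm
    _ = (σ (c x) : ℂ) := by rw [hcomm, AlgEquiv.mul_apply]
    _ = -(σ x) := by rw [hcx, map_neg, NegMemClass.coe_neg]

theorem one_lt_sqrt13 : 1 < √13 := Real.lt_sqrt_of_sq_lt (by norm_num)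

theorem lambda0_sq : lambda0 ^ 2 = (1 - ((√13 : ℝ) : ℂ)) / 6 := by
  have h : (0 : ℝ) ≤ (-1 + √13) / 6 := by linarith [one_lt_sqrt13]
  rw [lambda0, mul_pow, Complex.I_sq, ← Complex.ofReal_pow, Real.sq_sqrt h]
  push_cast
  ring

theorem conj_lambda0 : conj lambda0 = -lambda0 := by
  rw [lambda0, map_mul, Complex.conj_I, Complex.conj_ofReal, neg_mul]

theorem lambda0_ne_ofReal (r : ℝ) : lambda0 ≠ r := by
  intro h
  have him := congrArg Complex.im h
  simp only [lambda0, Complex.I_mul_im, Complex.ofReal_re, Complex.ofReal_im] at him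
  rw [Real.sqrt_eq_zero'] at him
  linarith [one_lt_sqrt13]

theorem sqrt13_mem_of_lambda0_mem {K : IntermediateField ℚ ℂ} (h : lambda0 ∈ K) :
    ((√13 : ℝ) : ℂ) ∈ K := by
  have : ((√13 : ℝ) : ℂ) = 1 - 6 * lambda0 ^ 2 := by
    rw [lambda0_sq]
    ring
  rw [this]
  exact sub_mem (one_mem K) (mul_mem (ofNat_mem K 6) (pow_mem h 2))

theorem lambda0_not_mem_of_isAbelianGalois (K : IntermediateField ℚ ℂ) [IsAbelianGalois ℚ K] :
    lambda0 ∉ K := by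
  intro hl0
  let s : K := ⟨_, sqrt13_mem_of_lambda0_mem hl0⟩
  let l : K := ⟨lambda0, hl0⟩
  have hs : s ^ 2 = algebraMap ℚ K (13 : ℕ) := Subtype.ext <| by
    change ((√13 : ℝ) : ℂ) ^ 2 = ((13 : ℕ) : ℚ)
    rw [← Complex.ofReal_pow, Real.sq_sqrt (by norm_num)]
    norm_num
  obtain ⟨σ, hσ⟩ := exists_algEquiv_apply_eq_neg
    (irreducible_X_sq_sub_C_of_prime (by norm_num : Nat.Prime 13)) hs
  have hl : 6 * l ^ 2 = 1 - s := Subtype.ext <| by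
    change (6 : ℂ) * lambda0 ^ 2 = 1 - √13
    rw [lambda0_sq]
    ring
  have hσl : 6 * (σ l : ℂ) ^ 2 = 1 + √13 := by
    have := congrArg Subtype.val (congrArg σ hl)
    rw [map_mul, map_pow, map_sub, map_one, map_ofNat, hσ] at this
    change (6 : ℂ) * (σ l : ℂ) ^ 2 = 1 - -(√13 : ℂ) at this
    rw [this, sub_neg_eq_add]
  have hpos : 0 < ((σ l : ℂ) ^ 2).re := by
    have := congrArg Complex.re hσl
    simp only [Complex.mul_re, Complex.re_ofNat, Complex.im_ofNat, zero_mul, sub_zero,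
      Complex.add_re, Complex.one_re, Complex.ofReal_re] at this
    linarith [one_lt_sqrt13]
  exact hpos.not_ge
    (Complex.re_sq_nonpos_of_conj_eq_neg (conj_algEquiv_apply_eq_neg σ conj_lambda0))

/-- `ℚ(√13) ⊆ ℚ(ζ₁₃)`, but `ℚ(√13) ⊊ ℚ(λ₀)` and `ℚ(λ₀)` is not contained in any
cyclotomic field `ℚ(ζₙ)`. -/
theorem sqrt13_cyclotomic_but_lambda0_not :
    IntermediateField.adjoin ℚ ({((Real.sqrt 13 : ℝ) : ℂ)} : Set ℂ)
      ≤ IntermediateField.adjoin ℚ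
          ({Complex.exp (2 * Real.pi * Complex.I / 13)} : Set ℂ) ∧
    IntermediateField.adjoin ℚ ({((Real.sqrt 13 : ℝ) : ℂ)} : Set ℂ)
      < IntermediateField.adjoin ℚ ({lambda0} : Set ℂ) ∧
    ∀ (n : ℕ) (ζ : ℂ), 0 < n → IsPrimitiveRoot ζ n →
      ¬ IntermediateField.adjoin ℚ ({lambda0} : Set ℂ)
          ≤ IntermediateField.adjoin ℚ ({ζ} : Set ℂ) := by
  refine ⟨?_, ?_, fun n ζ hn hζ hle ↦ ?_⟩
  · have : Fact (Nat.Prime 13) := ⟨by norm_num⟩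
    have hζ := Complex.isPrimitiveRoot_exp 13 (by norm_num)
    push_cast at hζ
    exact adjoin_simple_le_iff.mpr
      (by exact_mod_cast sqrt_mem_adjoin_primitiveRoot (by norm_num) hζ)
  · refine lt_of_le_of_ne (adjoin_simple_le_iff.mpr
      (sqrt13_mem_of_lambda0_mem (mem_adjoin_simple_self ℚ lambda0))) fun heq ↦ ?_
    have hreal : ℚ⟮((√13 : ℝ) : ℂ)⟯ ≤ (Complex.ofRealAm.restrictScalars ℚ).fieldRange :=
      adjoin_simple_le_iff.mpr ⟨√13, rfl⟩
    obtain ⟨r, hr⟩ := hreal (heq ▸ mem_adjoin_simple_self ℚ lambda0)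
    exact lambda0_ne_ofReal r hr.symm
  · have : NeZero n := ⟨hn.ne'⟩
    have : IsAbelianGalois ℚ ℚ⟮ζ⟯ := hζ.isAbelianGalois_adjoin
    exact lambda0_not_mem_of_isAbelianGalois _ (adjoin_simple_le_iff.mp hle)
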